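/- arXiv:2509.23302 — 7 statements merged into one kernel-verified Lean document; each statement's English description precedes it below -/
import Mathlib

section
/- The map X ↦ tr(X⁻¹) is convex on the set of n×n Hermitian positive definite matrices. -/
open scoped ComplexOrder
open Matrix

/-- Trace of a positive semidefinite complex matrix has nonnegative real part. -/
lemma psd_trace_re_nonneg {n : ℕ} {A : Matrix (Fin n) (Fin n) ℂ}
    (hA : A.PosSemidef) : 0 ≤ A.trace.re := by
  have h : ∀ i, 0 ≤ (A i i).re := by
    intro i
    have := hA.dotProduct_mulVec_nonneg (Pi.single i 1)
    rw [Complex.le_def] at this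
    simpa [dotProduct, Matrix.mulVec, Pi.single_apply, apply_ite] using this.1
  simp only [Matrix.trace, Matrix.diag, Complex.re_sum]
  exact Finset.sum_nonneg fun i _ => h i

/-- Key variational inequality: for PD `X` and any `Z`,
`re tr(Z + Zᴴ - Zᴴ X Z) ≤ re tr(X⁻¹)`. -/
lemma key_ineq {n : ℕ} (X Z : Matrix (Fin n) (Fin n) ℂ) (hX : X.PosDef) :
    Z.trace.re + Zᴴ.trace.re - ((Zᴴ * X * Z).trace).re ≤ (X⁻¹).trace.re := by
  have hdet : IsUnit X.det := (Matrix.isUnit_iff_isUnit_det _).mp hX.isUnit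
  have hXinv : X⁻¹ᴴ = X⁻¹ := hX.isHermitian.inv.eq
  set W := Z - X⁻¹ with hW
  have hpsd : (Wᴴ * X * W).PosSemidef := hX.posSemidef.conjTranspose_mul_mul_same W
  have hexp : Wᴴ * X * W = Zᴴ * X * Z - Zᴴ - Z + X⁻¹ := by
    have h1 : X * X⁻¹ = 1 := Matrix.mul_nonsing_inv X hdet
    have h2 : X⁻¹ * X = 1 := Matrix.nonsing_inv_mul X hdet
    rw [hW]
    simp only [Matrix.conjTranspose_sub, hX.isHermitian.inv.eq]
    rw [Matrix.sub_mul, Matrix.sub_mul, Matrix.mul_sub, Matrix.mul_sub]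
    rw [show Zᴴ * X * X⁻¹ = Zᴴ by rw [Matrix.mul_assoc, h1, Matrix.mul_one],
        show X⁻¹ * X * Z = Z by rw [h2, Matrix.one_mul],
        show X⁻¹ * X * X⁻¹ = X⁻¹ by rw [h2, Matrix.one_mul]]
    abel
  have htr : 0 ≤ ((Wᴴ * X * W).trace).re := psd_trace_re_nonneg hpsd
  rw [hexp] at htr
  simp only [Matrix.trace_add, Matrix.trace_sub, Complex.add_re, Complex.sub_re] at htr
  linarith

/-- The map `X ↦ tr(X⁻¹)` is convex on the set of `n × n` Hermitian positive
definite matrices: for positive definite `X, Y` and `λ ∈ [0,1]`,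
`tr((λX + (1-λ)Y)⁻¹) ≤ λ tr(X⁻¹) + (1-λ) tr(Y⁻¹)`. -/
theorem trace_inv_convexOn_posDef {n : ℕ}
    (X Y : Matrix (Fin n) (Fin n) ℂ) (hX : X.PosDef) (hY : Y.PosDef)
    (l : ℝ) (hl0 : 0 ≤ l) (hl1 : l ≤ 1) :
    ((((l : ℂ) • X + ((1 - l : ℝ) : ℂ) • Y)⁻¹).trace).re ≤
      l * (X⁻¹).trace.re + (1 - l) * (Y⁻¹).trace.re := by
  have hsmul : ∀ (c : ℝ), 0 < c → ∀ (A : Matrix (Fin n) (Fin n) ℂ), A.PosDef →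
      ((c : ℂ) • A).PosDef := by
    intro c hc A hA
    refine Matrix.PosDef.of_dotProduct_mulVec_pos ?_ fun x hx => ?_
    · unfold Matrix.IsHermitian
      rw [Matrix.conjTranspose_smul, hA.1.eq]
      simp
    · rw [Matrix.smul_mulVec, dotProduct_smul, smul_eq_mul]
      exact mul_pos (by exact_mod_cast hc) (hA.dotProduct_mulVec_pos hx)
  set M := (l : ℂ) • X + ((1 - l : ℝ) : ℂ) • Y with hMdef
  have hM : M.PosDef := by
    rcases hl0.eq_or_lt with rfl | hl0'
    · simpa [hMdef] using hY
    rcases hl1.eq_or_lt with rfl | hl1'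
    · simpa [hMdef] using hX
    · exact (hsmul l hl0' X hX).add (hsmul (1 - l) (by linarith) Y hY)
  set Z := M⁻¹ with hZ
  have hdetM : IsUnit M.det := (Matrix.isUnit_iff_isUnit_det _).mp hM.isUnit
  have hZh : Zᴴ = Z := hM.isHermitian.inv.eq
  -- tr(M⁻¹) = tr Z + tr Zᴴ - tr(Zᴴ M Z)
  have hZMZ : Zᴴ * M * Z = Z := by
    rw [hZh, hZ, Matrix.nonsing_inv_mul M hdetM, Matrix.one_mul]
  have hid : ((M⁻¹).trace).re = Z.trace.re + Zᴴ.trace.re - ((Zᴴ * M * Z).trace).re := by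
    rw [hZMZ, hZh, ← hZ]; ring
  have hsplit : Zᴴ * M * Z = (l : ℂ) • (Zᴴ * X * Z) + ((1 - l : ℝ) : ℂ) • (Zᴴ * Y * Z) := by
    rw [hMdef]
    rw [Matrix.mul_add, Matrix.add_mul]
    simp [Matrix.mul_smul, Matrix.smul_mul]
  have hX' := key_ineq X Z hX
  have hY' := key_ineq Y Z hY
  have htr : ((Zᴴ * M * Z).trace).re
      = l * ((Zᴴ * X * Z).trace).re + (1 - l) * ((Zᴴ * Y * Z).trace).re := by
    rw [hsplit]
    simp [Matrix.trace_add, Matrix.trace_smul, Complex.add_re]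
  rw [hid, htr]
  nlinarith [key_ineq X Z hX, key_ineq Y Z hY, hl0, hl1]
end

section
/- For any positive semidefinite Hermitian matrix R and nonzero vector h with h^H R h > 0, the vector w = (h^H R h)^{-1/2} R h satisfies h^H (w w^H) h = h^H R h and R - w w^H is positive semidefinite. -/
open scoped ComplexOrder Matrix

/-- Quadratic form of `vecMulVec w (star w)` factors. -/
lemma vecMulVec_quad {n : ℕ} (w x : Fin n → ℂ) :
    star x ⬝ᵥ (Matrix.vecMulVec w (star w)).mulVec x
      = (star x ⬝ᵥ w) * (star w ⬝ᵥ x) := by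
  simp only [Matrix.mulVec, dotProduct, Matrix.vecMulVec_apply, Pi.star_apply,
    Finset.mul_sum, Finset.sum_mul]
  rw [Finset.sum_comm]
  congr 1; ext i; congr 1; ext j; ring

/-- Cauchy–Schwarz for a PSD matrix. -/
lemma psd_cauchy_schwarz {n : ℕ} (R : Matrix (Fin n) (Fin n) ℂ) (hR : R.PosSemidef)
    (x y : Fin n → ℂ) :
    ‖star x ⬝ᵥ R.mulVec y‖ ^ 2
      ≤ (star x ⬝ᵥ R.mulVec x).re * (star y ⬝ᵥ R.mulVec y).re := by
  obtain ⟨B, rfl⟩ : ∃ B : Matrix (Fin n) (Fin n) ℂ, R = Bᴴ * B := by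
    open scoped MatrixOrder in
    obtain ⟨B, hB⟩ := CStarAlgebra.nonneg_iff_eq_star_mul_self.mp hR.nonneg
    exact ⟨B, hB⟩
  have key : ∀ u v : Fin n → ℂ,
      star u ⬝ᵥ (Bᴴ * B).mulVec v
        = (inner ℂ ((WithLp.equiv 2 _).symm (B.mulVec u))
            ((WithLp.equiv 2 _).symm (B.mulVec v)) : ℂ) := by
    intro u v
    rw [WithLp.equiv_symm_apply, EuclideanSpace.inner_toLp_toLp, ← Matrix.mulVec_mulVec,
      Matrix.dotProduct_mulVec, ← Matrix.star_mulVec, dotProduct_comm]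
  rw [key, key, key]
  set a := (WithLp.equiv 2 (Fin n → ℂ)).symm (B.mulVec x)
  set b := (WithLp.equiv 2 (Fin n → ℂ)).symm (B.mulVec y)
  have h1 := inner_mul_inner_self_le (𝕜 := ℂ) a b
  rwa [← norm_inner_symm a b, ← sq] at h1

/-- Rank-one extraction after semidefinite relaxation: for a positive semidefinite
Hermitian matrix `R` and nonzero vector `h` with `hᴴ R h > 0`, the vector
`w = (hᴴ R h)^{-1/2} R h` satisfies `hᴴ (w wᴴ) h = hᴴ R h` and `R - w wᴴ` is
positive semidefinite. -/
theorem rank_one_extraction {n : ℕ}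
    (R : Matrix (Fin n) (Fin n) ℂ) (hR : R.PosSemidef)
    (h : Fin n → ℂ) (hh : h ≠ 0)
    (hpos : 0 < (star h ⬝ᵥ R.mulVec h).re)
    (w : Fin n → ℂ)
    (hw : w = ((Real.sqrt ((star h ⬝ᵥ R.mulVec h).re) : ℂ))⁻¹ • R.mulVec h) :
    star h ⬝ᵥ (Matrix.vecMulVec w (star w)).mulVec h = star h ⬝ᵥ R.mulVec h ∧
      (R - Matrix.vecMulVec w (star w)).PosSemidef := by
  set c : ℝ := (star h ⬝ᵥ R.mulVec h).re with hc
  have hcform : star h ⬝ᵥ R.mulVec h = (c : ℂ) := by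
    have h0 := hR.dotProduct_mulVec_nonneg h
    rw [Complex.le_def] at h0
    exact Complex.ext rfl h0.2.symm
  have hs : ((Real.sqrt c : ℂ))⁻¹ ≠ 0 := by
    simp [Real.sqrt_eq_zero', not_le, hpos, ne_of_gt hpos]
  have hsq : ((Real.sqrt c : ℂ)) * ((Real.sqrt c : ℂ)) = (c : ℂ) := by
    rw [← Complex.ofReal_mul, Real.mul_self_sqrt hpos.le]
  have hxw : ∀ x : Fin n → ℂ, star x ⬝ᵥ w
      = ((Real.sqrt c : ℂ))⁻¹ * (star x ⬝ᵥ R.mulVec x + 0) → True := fun _ _ => trivial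
  -- quadratic form of w wᴴ at x
  have hquad : ∀ x : Fin n → ℂ,
      star x ⬝ᵥ (Matrix.vecMulVec w (star w)).mulVec x
        = ((‖star x ⬝ᵥ R.mulVec h‖ ^ 2 / c : ℝ) : ℂ) := by
    intro x
    rw [vecMulVec_quad]
    have h1 : star w ⬝ᵥ x = starRingEnd ℂ (star x ⬝ᵥ w) := by
      simp only [dotProduct, map_sum, map_mul, Pi.star_apply,
        RingHom.coe_coe, Complex.conj_conj]
      exact Finset.sum_congr rfl fun i _ => by simp [mul_comm]
    rw [h1, Complex.mul_conj]
    rw [hw]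
    have h2 : star x ⬝ᵥ (((Real.sqrt c : ℂ))⁻¹ • R.mulVec h)
        = ((Real.sqrt c : ℂ))⁻¹ * (star x ⬝ᵥ R.mulVec h) := by
      rw [dotProduct_smul]; rfl
    rw [h2]
    rw [Complex.normSq_mul, Complex.ofReal_mul, Complex.ofReal_div]
    have h3 : (Complex.normSq ((Real.sqrt c : ℂ))⁻¹ : ℂ) = (c : ℂ)⁻¹ := by
      rw [Complex.normSq_inv, Complex.normSq_ofReal, Complex.ofReal_inv,
        Complex.ofReal_mul, ← Complex.ofReal_mul] at *
      norm_cast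
      rw [Real.mul_self_sqrt hpos.le]
    rw [h3]
    have h4 : Complex.normSq (star x ⬝ᵥ R.mulVec h) = ‖star x ⬝ᵥ R.mulVec h‖ ^ 2 := by
      rw [Complex.normSq_eq_norm_sq]
    rw [h4]
    push_cast
    ring
  constructor
  · rw [hquad h, hcform, Complex.norm_real, Real.norm_eq_abs, abs_of_pos hpos]
    norm_cast
    rw [pow_two, mul_div_assoc, div_self hpos.ne', mul_one]
  · refine Matrix.PosSemidef.of_dotProduct_mulVec_nonneg ?_ ?_
    · have hRherm := hR.1
      have hwherm : (Matrix.vecMulVec w (star w)).IsHermitian := by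
        ext i j
        simp [Matrix.conjTranspose_apply, Matrix.vecMulVec_apply, mul_comm]
      exact hRherm.sub hwherm
    · intro x
      rw [Matrix.sub_mulVec, dotProduct_sub, hquad x]
      have hcs := psd_cauchy_schwarz R hR x h
      rw [← hc] at hcs
      have hb : ‖star x ⬝ᵥ R.mulVec h‖ ^ 2 / c ≤ (star x ⬝ᵥ R.mulVec x).re := by
        rw [div_le_iff₀ hpos]
        exact hcs
      have hxform : star x ⬝ᵥ R.mulVec x
          = (((star x ⬝ᵥ R.mulVec x).re : ℝ) : ℂ) := by
        have h0 := hR.dotProduct_mulVec_nonneg x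
        rw [Complex.le_def] at h0
        exact Complex.ext rfl h0.2.symm
      rw [Complex.le_def]
      constructor
      · simp only [Complex.sub_re, Complex.zero_re, Complex.ofReal_re]
        rw [hxform]
        simpa using hb
      · simp only [Complex.sub_im, Complex.zero_im, Complex.ofReal_im]
        rw [hxform]
        simp
end

section
/- The function f(x) = ‖x - Π_C(x)‖² (squared distance to a nonempty closed convex set C in a Hilbert space) is differentiable with gradient ∇f(x) = 2(x - Π_C(x)). -/
open RealInnerProductSpace

/-- Variational inequality for the metric projection. -/
lemma proj_vi {H : Type*} [NormedAddCommGroup H] [InnerProductSpace ℝ H]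
    {C : Set H} (hconv : Convex ℝ C) {P : H → H}
    (hP : ∀ z, P z ∈ C ∧ ∀ w ∈ C, ‖z - P z‖ ≤ ‖z - w‖)
    (z : H) : ∀ w ∈ C, ⟪z - P z, w - P z⟫ ≤ 0 := by
  have hmem := (hP z).1
  haveI : Nonempty C := ⟨⟨P z, hmem⟩⟩
  have heq : ‖z - P z‖ = ⨅ w : C, ‖z - w‖ := by
    refine le_antisymm (le_ciInf fun w => (hP z).2 w w.2) ?_
    exact ciInf_le ⟨0, Set.forall_mem_range.2 fun _ => norm_nonneg _⟩ (⟨P z, hmem⟩ : C)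
  exact (norm_eq_iInf_iff_real_inner_le_zero hconv hmem).1 heq

/-- The squared distance to a nonempty closed convex set `C` in a real Hilbert
space, `f(x) = ‖x - Π_C x‖²`, is differentiable with gradient `∇f(x) = 2(x - Π_C x)`,
where `Π_C` is the metric projection onto `C`. -/
theorem hasGradientAt_sq_dist_convex
    {H : Type*} [NormedAddCommGroup H] [InnerProductSpace ℝ H] [CompleteSpace H]
    (C : Set H) (hne : C.Nonempty) (hclosed : IsClosed C) (hconv : Convex ℝ C)
    (P : H → H)
    (hP : ∀ z, P z ∈ C ∧ ∀ w ∈ C, ‖z - P z‖ ≤ ‖z - w‖)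
    (x : H) :
    HasGradientAt (fun z => ‖z - P z‖ ^ 2) ((2 : ℝ) • (x - P x)) x := by
  rw [hasGradientAt_iff_isLittleO]
  have key : ∀ y : H, |‖y - P y‖ ^ 2 - ‖x - P x‖ ^ 2 - ⟪(2:ℝ) • (x - P x), y - x⟫| ≤
      ‖y - x‖ ^ 2 := by
    intro y
    set a := x - P x with ha
    set b := y - P y with hb
    set d := y - x with hd
    set q := P y - P x with hq
    have hbad : b = a + d - q := by simp [ha, hb, hd, hq]
    -- upper bound
    have h1 : ‖b‖ ^ 2 ≤ ‖a + d‖ ^ 2 := by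
      have := (hP y).2 (P x) (hP x).1
      have h2 : y - P x = a + d := by simp [ha, hd]
      rw [← h2]
      exact pow_le_pow_left₀ (norm_nonneg _) this 2
    -- lower bound
    have h2 : ‖a‖ ^ 2 ≤ ‖b - d‖ ^ 2 := by
      have := (hP x).2 (P y) (hP y).1
      have h3 : x - P y = b - d := by simp [hb, hd]
      rw [← h3]
      exact pow_le_pow_left₀ (norm_nonneg _) this 2
    -- monotonicity
    have hmono : ‖q‖ ^ 2 ≤ ⟪q, d⟫ := by
      have v1 := proj_vi hconv hP x (P y) (hP y).1
      have v2 := proj_vi hconv hP y (P x) (hP x).1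
      have e1 : P y - P x = q := rfl
      have e2 : P x - P y = -q := by simp [hq]
      rw [e1] at v1; rw [e2] at v2
      have : ⟪a - (b : H), q⟫ ≤ 0 := by
        have := add_nonpos v1 v2
        rw [inner_neg_right] at v2
        calc ⟪a - b, q⟫ = ⟪a, q⟫ - ⟪b, q⟫ := by rw [inner_sub_left]
        _ ≤ 0 := by
            have hbq : (0:ℝ) ≤ ⟪b, q⟫ := by linarith [v2]
            linarith [v1, hbq]
      have hab : a - b = q - d := by rw [hbad]; abel
      rw [hab, inner_sub_left, real_inner_self_eq_norm_sq] at this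
      have hcomm : ⟪d, q⟫ = ⟪q, d⟫ := real_inner_comm q d
      linarith
    have hcs : ⟪q, d⟫ ≤ ‖q‖ * ‖d‖ := real_inner_le_norm q d
    have hqd : ⟪q, d⟫ ≤ ‖d‖ ^ 2 := by
      nlinarith [norm_nonneg q, norm_nonneg d]
    have ead : ‖a + d‖ ^ 2 = ‖a‖ ^ 2 + 2 * ⟪a, d⟫ + ‖d‖ ^ 2 := by
      rw [← real_inner_self_eq_norm_sq, ← real_inner_self_eq_norm_sq,
        ← real_inner_self_eq_norm_sq, inner_add_add_self, real_inner_comm d a]; ring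
    have ebd : ‖b - d‖ ^ 2 = ‖b‖ ^ 2 - 2 * ⟪b, d⟫ + ‖d‖ ^ 2 := by
      rw [← real_inner_self_eq_norm_sq, ← real_inner_self_eq_norm_sq,
        ← real_inner_self_eq_norm_sq, inner_sub_sub_self, real_inner_comm d b]; ring
    have ebdq : ⟪b, d⟫ = ⟪a, d⟫ + ‖d‖ ^ 2 - ⟪q, d⟫ := by
      rw [hbad, inner_sub_left, inner_add_left, real_inner_self_eq_norm_sq]
    rw [inner_smul_left, RCLike.conj_to_real, abs_le]
    constructor <;> nlinarith [ead, ebd, h1, h2, ebdq, hqd]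
  rw [Asymptotics.isLittleO_iff]
  intro ε hε
  have : ∀ᶠ y in nhds x, ‖y - x‖ ≤ ε := by
    have := Metric.ball_mem_nhds x hε
    filter_upwards [this] with y hy
    rw [Metric.mem_ball, dist_eq_norm] at hy
    exact hy.le
  filter_upwards [this] with y hy
  have hk := key y
  rw [Real.norm_eq_abs]
  calc |‖y - P y‖ ^ 2 - ‖x - P x‖ ^ 2 - ⟪(2:ℝ) • (x - P x), y - x⟫| ≤ ‖y - x‖ ^ 2 := hk
  _ = ‖y - x‖ * ‖y - x‖ := sq (‖y - x‖) ▸ by ring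
  _ ≤ ε * ‖y - x‖ := by nlinarith [norm_nonneg (y - x)]
end

section
/- Zoutendijk condition: Let f: M → ℝ be bounded below on iterates of a line-search method W_{ℓ+1} = R(W_ℓ + α_ℓ D_ℓ) on a Riemannian manifold, where each step size α_ℓ satisfies the strong Wolfe conditions with constants 0 < c₁ < c₂ < 1, each D_ℓ is a descent direction, and grad f, R, and the tangent projection are Lipschitz continuous with constants L_f, L_R, L_T. Then Σ_{ℓ=0}^∞ cos²(φ_ℓ)·‖grad f(W_ℓ)‖² < ∞, where cos(φ_ℓ) = -⟨grad f(W_ℓ), D_ℓ⟩/(‖grad f(W_ℓ)‖·‖D_ℓ‖). -/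
open RealInnerProductSpace

/-- Zoutendijk condition (Euclidean version): for a line-search method
`W_{ℓ+1} = W_ℓ + α_ℓ D_ℓ` with descent directions, step sizes satisfying the strong
Wolfe conditions (`0 < c₁ < c₂ < 1`), a Lipschitz-continuous gradient, and `f`
bounded below along the iterates, one has
`Σ_ℓ cos²(φ_ℓ) ‖grad f(W_ℓ)‖² < ∞`, where
`cos φ_ℓ = -⟨grad f(W_ℓ), D_ℓ⟩ / (‖grad f(W_ℓ)‖ ‖D_ℓ‖)`. -/
theorem zoutendijk_condition
    {H : Type*} [NormedAddCommGroup H] [InnerProductSpace ℝ H] [CompleteSpace H]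
    (f : H → ℝ) (g : H → H)
    (hgrad : ∀ x, HasGradientAt f (g x) x)
    (L : ℝ) (hL : 0 < L) (hLip : LipschitzWith (Real.toNNReal L) g)
    (c₁ c₂ : ℝ) (hc₁ : 0 < c₁) (hc₁c₂ : c₁ < c₂) (hc₂ : c₂ < 1)
    (W D : ℕ → H) (α : ℕ → ℝ)
    (hα : ∀ ℓ, 0 < α ℓ)
    (hupdate : ∀ ℓ, W (ℓ + 1) = W ℓ + α ℓ • D ℓ)
    (hdescent : ∀ ℓ, ⟪g (W ℓ), D ℓ⟫ < 0)
    (hwolfe₁ : ∀ ℓ, f (W (ℓ + 1)) ≤ f (W ℓ) + c₁ * α ℓ * ⟪g (W ℓ), D ℓ⟫)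
    (hwolfe₂ : ∀ ℓ, |⟪g (W (ℓ + 1)), D ℓ⟫| ≤ c₂ * |⟪g (W ℓ), D ℓ⟫|)
    (B : ℝ) (hbdd : ∀ ℓ, B ≤ f (W ℓ)) :
    Summable (fun ℓ =>
      (-⟪g (W ℓ), D ℓ⟫ / (‖g (W ℓ)‖ * ‖D ℓ‖)) ^ 2 * ‖g (W ℓ)‖ ^ 2) := by
  set C := c₁ * (1 - c₂) / L with hCdef
  have hCpos : 0 < C := div_pos (mul_pos hc₁ (by linarith)) hL
  have hDne : ∀ ℓ, D ℓ ≠ 0 := by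
    intro ℓ h
    have := hdescent ℓ
    rw [h, inner_zero_right] at this
    linarith
  have hgne : ∀ ℓ, g (W ℓ) ≠ 0 := by
    intro ℓ h
    have := hdescent ℓ
    rw [h, inner_zero_left] at this
    linarith
  have key : ∀ ℓ, C * ((⟪g (W ℓ), D ℓ⟫) ^ 2 / ‖D ℓ‖ ^ 2) ≤ f (W ℓ) - f (W (ℓ + 1)) := by
    intro ℓ
    have hp := hdescent ℓ
    have hDn : 0 < ‖D ℓ‖ := norm_pos_iff.mpr (hDne ℓ)
    have h2 : c₂ * ⟪g (W ℓ), D ℓ⟫ ≤ ⟪g (W (ℓ + 1)), D ℓ⟫ := by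
      have hw := hwolfe₂ ℓ
      have h3 := neg_abs_le (⟪g (W (ℓ + 1)), D ℓ⟫ : ℝ)
      rw [abs_of_neg hp] at hw
      linarith
    have hlipbound : ⟪g (W (ℓ + 1)), D ℓ⟫ - ⟪g (W ℓ), D ℓ⟫ ≤ L * α ℓ * ‖D ℓ‖ ^ 2 := by
      have h4 : ⟪g (W (ℓ + 1)) - g (W ℓ), D ℓ⟫ ≤ ‖g (W (ℓ + 1)) - g (W ℓ)‖ * ‖D ℓ‖ :=
        real_inner_le_norm _ _
      have h5 : ‖g (W (ℓ + 1)) - g (W ℓ)‖ ≤ L * ‖W (ℓ + 1) - W ℓ‖ := by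
        have := hLip.dist_le_mul (W (ℓ + 1)) (W ℓ)
        simpa [dist_eq_norm, Real.coe_toNNReal L hL.le] using this
      have h6 : ‖W (ℓ + 1) - W ℓ‖ = α ℓ * ‖D ℓ‖ := by
        rw [hupdate ℓ, add_sub_cancel_left, norm_smul, Real.norm_eq_abs,
          abs_of_pos (hα ℓ)]
      rw [inner_sub_left] at h4
      have h7 : ‖g (W (ℓ + 1)) - g (W ℓ)‖ * ‖D ℓ‖ ≤ (L * (α ℓ * ‖D ℓ‖)) * ‖D ℓ‖ := by
        rw [← h6]
        exact mul_le_mul_of_nonneg_right h5 (norm_nonneg _)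
      nlinarith [sq_nonneg (‖D ℓ‖)]
    -- lower bound on α ℓ: (c₂ - 1) * p ≤ L * α ℓ * ‖D ℓ‖^2
    have hA : (c₂ - 1) * ⟪g (W ℓ), D ℓ⟫ ≤ L * α ℓ * ‖D ℓ‖ ^ 2 := by linarith
    have hw1 := hwolfe₁ ℓ
    have hq2 : (0:ℝ) < ‖D ℓ‖ ^ 2 := pow_pos hDn 2
    have hfinal : C * ((⟪g (W ℓ), D ℓ⟫) ^ 2 / ‖D ℓ‖ ^ 2) ≤ -(c₁ * α ℓ * ⟪g (W ℓ), D ℓ⟫) := by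
      rw [mul_div_assoc', div_le_iff₀ hq2, hCdef, div_mul_eq_mul_div, div_le_iff₀ hL]
      nlinarith [mul_le_mul_of_nonneg_left hA
        (by nlinarith : (0:ℝ) ≤ c₁ * (-⟪g (W ℓ), D ℓ⟫))]
    linarith
  -- rewrite the summand
  have heq : ∀ ℓ, (-⟪g (W ℓ), D ℓ⟫ / (‖g (W ℓ)‖ * ‖D ℓ‖)) ^ 2 * ‖g (W ℓ)‖ ^ 2
      = (⟪g (W ℓ), D ℓ⟫) ^ 2 / ‖D ℓ‖ ^ 2 := by
    intro ℓ
    have hg : ‖g (W ℓ)‖ ≠ 0 := norm_ne_zero_iff.mpr (hgne ℓ)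
    have hD : ‖D ℓ‖ ≠ 0 := norm_ne_zero_iff.mpr (hDne ℓ)
    field_simp
  apply summable_of_sum_range_le (c := (f (W 0) - B) / C)
  · intro ℓ
    positivity
  · intro n
    have hsum : C * (∑ i ∈ Finset.range n,
        (-⟪g (W i), D i⟫ / (‖g (W i)‖ * ‖D i‖)) ^ 2 * ‖g (W i)‖ ^ 2)
        ≤ f (W 0) - f (W n) := by
      rw [Finset.mul_sum]
      calc ∑ i ∈ Finset.range n,
            C * ((-⟪g (W i), D i⟫ / (‖g (W i)‖ * ‖D i‖)) ^ 2 * ‖g (W i)‖ ^ 2)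
          ≤ ∑ i ∈ Finset.range n, (f (W i) - f (W (i + 1))) := by
            apply Finset.sum_le_sum
            intro i _
            rw [heq i]
            exact key i
        _ = f (W 0) - f (W n) := Finset.sum_range_sub' (fun i => f (W i)) n
    rw [le_div_iff₀ hCpos]
    have := hbdd n
    linarith
end

section
/- Bounded descent lemma for Fletcher–Reeves CG under strong Wolfe conditions: if α_ℓ satisfies the strong Wolfe conditions with c₂ < 1/2, then for every iteration ℓ, -1/(1-c₂) ≤ ⟨grad f(W_ℓ), D_ℓ⟩/‖grad f(W_ℓ)‖² ≤ (2c₂-1)/(1-c₂), where directions are updated by D_ℓ = -grad f(W_ℓ) + β_ℓ D_{ℓ-1} with β_ℓ = ‖grad f(W_ℓ)‖²/‖grad f(W_{ℓ-1})‖², D_0 = -grad f(W_0). -/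
open RealInnerProductSpace

/-- Bounded descent lemma for Fletcher–Reeves conjugate gradient under the strong
Wolfe curvature condition with `c₂ < 1/2`: for every iteration `ℓ`,
`-1/(1-c₂) ≤ ⟨grad f(W_ℓ), D_ℓ⟩ / ‖grad f(W_ℓ)‖² ≤ (2c₂-1)/(1-c₂)`,
where `D_0 = -grad f(W_0)` and
`D_{ℓ+1} = -grad f(W_{ℓ+1}) + β_{ℓ+1} D_ℓ` with
`β_{ℓ+1} = ‖g(W_{ℓ+1})‖² / ‖g(W_ℓ)‖²`. -/
theorem fletcher_reeves_bounded_descent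
    {H : Type*} [NormedAddCommGroup H] [InnerProductSpace ℝ H] [CompleteSpace H]
    (f : H → ℝ) (g : H → H)
    (hgrad : ∀ x, HasGradientAt f (g x) x)
    (c₂ : ℝ) (hc₂0 : 0 < c₂) (hc₂ : c₂ < 1 / 2)
    (W D : ℕ → H)
    (hgne : ∀ ℓ, g (W ℓ) ≠ 0)
    (hD0 : D 0 = -g (W 0))
    (hDrec : ∀ ℓ, D (ℓ + 1) =
      -g (W (ℓ + 1)) + (‖g (W (ℓ + 1))‖ ^ 2 / ‖g (W ℓ)‖ ^ 2) • D ℓ)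
    (hwolfe₂ : ∀ ℓ, |⟪g (W (ℓ + 1)), D ℓ⟫| ≤ c₂ * |⟪g (W ℓ), D ℓ⟫|) :
    ∀ ℓ, -1 / (1 - c₂) ≤ ⟪g (W ℓ), D ℓ⟫ / ‖g (W ℓ)‖ ^ 2 ∧
      ⟪g (W ℓ), D ℓ⟫ / ‖g (W ℓ)‖ ^ 2 ≤ (2 * c₂ - 1) / (1 - c₂) := by
  have h1c : (0:ℝ) < 1 - c₂ := by linarith
  have hnpos : ∀ ℓ, (0:ℝ) < ‖g (W ℓ)‖ ^ 2 :=
    fun ℓ => pow_pos (norm_pos_iff.mpr (hgne ℓ)) 2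
  intro ℓ
  induction ℓ with
  | zero =>
    have h0 := hnpos 0
    have hinner : ⟪g (W 0), D 0⟫ = -‖g (W 0)‖ ^ 2 := by
      rw [hD0, inner_neg_right, real_inner_self_eq_norm_sq]
    rw [hinner]
    have hval : -‖g (W 0)‖ ^ 2 / ‖g (W 0)‖ ^ 2 = -1 := by
      rw [neg_div, div_self h0.ne']
    rw [hval]
    constructor
    · rw [div_le_iff₀ h1c]; nlinarith
    · rw [le_div_iff₀ h1c]; nlinarith
  | succ ℓ ih =>
    have hgl := hnpos ℓ
    have hgl' := hnpos (ℓ + 1)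
    have hinner : ⟪g (W (ℓ + 1)), D (ℓ + 1)⟫ =
        -‖g (W (ℓ + 1))‖ ^ 2 + (‖g (W (ℓ + 1))‖ ^ 2 / ‖g (W ℓ)‖ ^ 2) *
          ⟪g (W (ℓ + 1)), D ℓ⟫ := by
      rw [hDrec ℓ, inner_add_right, inner_neg_right, inner_smul_right,
        real_inner_self_eq_norm_sq]
    -- multiplied-out forms of the induction hypothesis
    have hihl : -1 * ‖g (W ℓ)‖ ^ 2 ≤ ⟪g (W ℓ), D ℓ⟫ * (1 - c₂) :=
      (div_le_div_iff₀ h1c hgl).mp ih.1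
    have hihu : ⟪g (W ℓ), D ℓ⟫ * (1 - c₂) ≤ (2 * c₂ - 1) * ‖g (W ℓ)‖ ^ 2 :=
      (div_le_div_iff₀ hgl h1c).mp ih.2
    have hneg : ⟪g (W ℓ), D ℓ⟫ ≤ 0 := by nlinarith
    have habs : |⟪g (W ℓ), D ℓ⟫| = -⟪g (W ℓ), D ℓ⟫ := abs_of_nonpos hneg
    have hw := hwolfe₂ ℓ
    rw [habs] at hw
    -- |⟪g', Dℓ⟫| * (1 - c₂) ≤ c₂ * ‖gℓ‖²
    have hb : |⟪g (W (ℓ + 1)), D ℓ⟫| * (1 - c₂) ≤ c₂ * ‖g (W ℓ)‖ ^ 2 := by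
      nlinarith [mul_le_mul_of_nonneg_right hw h1c.le]
    have hbl := neg_abs_le ⟪g (W (ℓ + 1)), D ℓ⟫
    have hbu := le_abs_self ⟪g (W (ℓ + 1)), D ℓ⟫
    have hr : ⟪g (W (ℓ + 1)), D (ℓ + 1)⟫ / ‖g (W (ℓ + 1))‖ ^ 2 =
        -1 + ⟪g (W (ℓ + 1)), D ℓ⟫ / ‖g (W ℓ)‖ ^ 2 := by
      rw [hinner]
      have hn1 : ‖g (W (ℓ + 1))‖ ≠ 0 := norm_ne_zero_iff.mpr (hgne _)
      have hn0 : ‖g (W ℓ)‖ ≠ 0 := norm_ne_zero_iff.mpr (hgne _)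
      field_simp
    rw [hr]
    have ht1 : -(c₂ / (1 - c₂)) ≤ ⟪g (W (ℓ + 1)), D ℓ⟫ / ‖g (W ℓ)‖ ^ 2 := by
      rw [neg_div', div_le_div_iff₀ h1c hgl]
      nlinarith [mul_le_mul_of_nonneg_right hbl h1c.le]
    have ht2 : ⟪g (W (ℓ + 1)), D ℓ⟫ / ‖g (W ℓ)‖ ^ 2 ≤ c₂ / (1 - c₂) := by
      rw [div_le_div_iff₀ hgl h1c]
      nlinarith [mul_le_mul_of_nonneg_right hbu h1c.le]
    have e1 : -1 / (1 - c₂) = -1 + -(c₂ / (1 - c₂)) := by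
      field_simp
      ring
    have e2 : (2 * c₂ - 1) / (1 - c₂) = -1 + c₂ / (1 - c₂) := by
      field_simp
      ring
    constructor
    · rw [e1]; linarith
    · rw [e2]; linarith
end

section
/- Global convergence of Fletcher–Reeves CG: under the hypotheses of the Zoutendijk condition and the bounded-descent lemma (strong Wolfe steps with c₂ < 1/2, Lipschitz gradient, f bounded below), the Fletcher–Reeves conjugate gradient iteration satisfies lim inf_{ℓ→∞} ‖grad f(W_ℓ)‖ = 0. -/
open RealInnerProductSpace

set_option maxHeartbeats 3200000 in
/-- Global convergence of the Fletcher–Reeves conjugate gradient method: for a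
smooth function `f` bounded below with Lipschitz-continuous gradient, iterates
`W_{ℓ+1} = W_ℓ + α_ℓ D_ℓ` with Fletcher–Reeves directions and strong Wolfe step
sizes (`0 < c₁ < c₂ < 1/2`), one has `lim inf_{ℓ→∞} ‖grad f(W_ℓ)‖ = 0`. -/
theorem fletcher_reeves_global_convergence
    {H : Type*} [NormedAddCommGroup H] [InnerProductSpace ℝ H] [CompleteSpace H]
    (f : H → ℝ) (g : H → H)
    (hgrad : ∀ x, HasGradientAt f (g x) x)
    (L : ℝ) (hL : 0 < L) (hLip : LipschitzWith (Real.toNNReal L) g)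
    (B : ℝ) (hbdd : ∀ x, B ≤ f x)
    (c₁ c₂ : ℝ) (hc₁ : 0 < c₁) (hc₁c₂ : c₁ < c₂) (hc₂ : c₂ < 1 / 2)
    (W D : ℕ → H) (α : ℕ → ℝ)
    (hα : ∀ ℓ, 0 < α ℓ)
    (hupdate : ∀ ℓ, W (ℓ + 1) = W ℓ + α ℓ • D ℓ)
    (hgne : ∀ ℓ, g (W ℓ) ≠ 0)
    (hD0 : D 0 = -g (W 0))
    (hDrec : ∀ ℓ, D (ℓ + 1) =
      -g (W (ℓ + 1)) + (‖g (W (ℓ + 1))‖ ^ 2 / ‖g (W ℓ)‖ ^ 2) • D ℓ)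
    (hwolfe₁ : ∀ ℓ, f (W (ℓ + 1)) ≤ f (W ℓ) + c₁ * α ℓ * ⟪g (W ℓ), D ℓ⟫)
    (hwolfe₂ : ∀ ℓ, |⟪g (W (ℓ + 1)), D ℓ⟫| ≤ c₂ * |⟪g (W ℓ), D ℓ⟫|) :
    Filter.liminf (fun ℓ => ‖g (W ℓ)‖) Filter.atTop = 0 := by
  have hc₂pos : 0 < c₂ := hc₁.trans hc₁c₂
  have h1c₂ : 0 < 1 - c₂ := by linarith
  have hθpos : 0 < 1 - 2 * c₂ := by linarith
  set G : ℕ → ℝ := fun ℓ => ‖g (W ℓ)‖ with hGdef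
  have hG : ∀ ℓ, 0 < G ℓ := fun ℓ => norm_pos_iff.mpr (hgne ℓ)
  have hGne : ∀ ℓ, G ℓ ≠ 0 := fun ℓ => (hG ℓ).ne'
  have hGn : ∀ m : ℕ, ‖g (W m)‖ = G m := fun _ => rfl
  set p : ℕ → ℝ := fun ℓ => ⟪g (W ℓ), D ℓ⟫ with hpdef
  -- recursion for p
  have hprec : ∀ ℓ, p (ℓ + 1)
      = -G (ℓ + 1) ^ 2 + (G (ℓ + 1) ^ 2 / G ℓ ^ 2) * ⟪g (W (ℓ + 1)), D ℓ⟫ := by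
    intro ℓ
    show ⟪g (W (ℓ + 1)), D (ℓ + 1)⟫ = _
    rw [hDrec ℓ, inner_add_right, inner_neg_right, inner_smul_right,
      real_inner_self_eq_norm_sq]
  -- bounded descent lemma
  have hA : ∀ ℓ, -(1 / (1 - c₂)) * G ℓ ^ 2 ≤ p ℓ ∧
      p ℓ ≤ -((1 - 2 * c₂) / (1 - c₂)) * G ℓ ^ 2 := by
    intro ℓ
    induction ℓ with
    | zero =>
      have h0 : p 0 = -(G 0 ^ 2) := by
        show ⟪g (W 0), D 0⟫ = _
        rw [hD0, inner_neg_right, real_inner_self_eq_norm_sq]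
      rw [h0]
      constructor
      · rw [neg_mul, neg_le_neg_iff]
        have h1 : (1:ℝ) ≤ 1 / (1 - c₂) := by
          rw [le_div_iff₀ h1c₂]; linarith
        nlinarith [sq_nonneg (G 0)]
      · rw [neg_mul, neg_le_neg_iff]
        have h1 : (1 - 2 * c₂) / (1 - c₂) ≤ 1 := by
          rw [div_le_one h1c₂]; linarith
        nlinarith [sq_nonneg (G 0)]
    | succ ℓ ih =>
      obtain ⟨ih1, ih2⟩ := ih
      have hpneg : p ℓ < 0 := by
        have : 0 < (1 - 2 * c₂) / (1 - c₂) * G ℓ ^ 2 :=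
          mul_pos (div_pos hθpos h1c₂) (pow_pos (hG ℓ) 2)
        linarith
      have hq : |⟪g (W (ℓ + 1)), D ℓ⟫| ≤ c₂ * (-p ℓ) := by
        have := hwolfe₂ ℓ
        rwa [abs_of_neg hpneg] at this
      set q := ⟪g (W (ℓ + 1)), D ℓ⟫ with hqdef
      have hq2 : |q| ≤ c₂ / (1 - c₂) * G ℓ ^ 2 := by
        have h1 : -p ℓ ≤ 1 / (1 - c₂) * G ℓ ^ 2 := by linarith
        calc |q| ≤ c₂ * (-p ℓ) := hq
          _ ≤ c₂ * (1 / (1 - c₂) * G ℓ ^ 2) := by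
              exact mul_le_mul_of_nonneg_left h1 hc₂pos.le
          _ = c₂ / (1 - c₂) * G ℓ ^ 2 := by ring
      set b := G (ℓ + 1) ^ 2 / G ℓ ^ 2 with hbdef
      have hb0 : 0 ≤ b := by positivity
      have hbG : b * G ℓ ^ 2 = G (ℓ + 1) ^ 2 :=
        div_mul_cancel₀ _ (pow_ne_zero 2 (hGne ℓ))
      have habs : |b * q| ≤ c₂ / (1 - c₂) * G (ℓ + 1) ^ 2 := by
        rw [abs_mul, abs_of_nonneg hb0]
        calc b * |q| ≤ b * (c₂ / (1 - c₂) * G ℓ ^ 2) :=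
              mul_le_mul_of_nonneg_left hq2 hb0
          _ = c₂ / (1 - c₂) * (b * G ℓ ^ 2) := by ring
          _ = c₂ / (1 - c₂) * G (ℓ + 1) ^ 2 := by rw [hbG]
      have habs1 : b * q ≤ c₂ / (1 - c₂) * G (ℓ + 1) ^ 2 :=
        (le_abs_self _).trans habs
      have habs2 : -(c₂ / (1 - c₂) * G (ℓ + 1) ^ 2) ≤ b * q :=
        neg_le_of_abs_le habs
      have hrec := hprec ℓ
      rw [← hqdef, ← hbdef] at hrec
      constructor
      · rw [hrec]
        have : -(1 / (1 - c₂)) * G (ℓ + 1) ^ 2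
            = -G (ℓ + 1) ^ 2 + -(c₂ / (1 - c₂) * G (ℓ + 1) ^ 2) := by
          field_simp; ring
        rw [this]
        linarith
      · rw [hrec]
        have : -((1 - 2 * c₂) / (1 - c₂)) * G (ℓ + 1) ^ 2
            = -G (ℓ + 1) ^ 2 + c₂ / (1 - c₂) * G (ℓ + 1) ^ 2 := by
          field_simp; ring
        rw [this]
        linarith
  have hpneg : ∀ ℓ, p ℓ < 0 := by
    intro ℓ
    have h2 := (hA ℓ).2
    have : 0 < (1 - 2 * c₂) / (1 - c₂) * G ℓ ^ 2 :=
      mul_pos (div_pos hθpos h1c₂) (pow_pos (hG ℓ) 2)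
    linarith
  have hDpos : ∀ ℓ, 0 < ‖D ℓ‖ := by
    intro ℓ
    rcases eq_or_ne (D ℓ) 0 with h | h
    · exfalso
      have : p ℓ = 0 := by simp [hpdef, h]
      exact absurd this (hpneg ℓ).ne
    · exact norm_pos_iff.mpr h
  have hDne : ∀ ℓ, ‖D ℓ‖ ≠ 0 := fun ℓ => (hDpos ℓ).ne'
  -- Zoutendijk-type step estimate
  set c : ℝ := c₁ * (1 - c₂) / L with hcdef
  have hcpos : 0 < c := by positivity
  set s : ℕ → ℝ := fun ℓ => p ℓ ^ 2 / ‖D ℓ‖ ^ 2 with hsdef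
  have hs0 : ∀ ℓ, 0 ≤ s ℓ := fun ℓ => by positivity
  have hstep : ∀ ℓ, f (W (ℓ + 1)) ≤ f (W ℓ) - c * s ℓ := by
    intro ℓ
    have hqge : c₂ * p ℓ ≤ ⟪g (W (ℓ + 1)), D ℓ⟫ := by
      have h1 := hwolfe₂ ℓ
      rw [abs_of_neg (hpneg ℓ)] at h1
      have h2 := neg_abs_le ⟪g (W (ℓ + 1)), D ℓ⟫
      linarith
    have hlip' : ‖g (W (ℓ + 1)) - g (W ℓ)‖ ≤ L * (α ℓ * ‖D ℓ‖) := by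
      have h1 := hLip.dist_le_mul (W (ℓ + 1)) (W ℓ)
      rw [dist_eq_norm, dist_eq_norm] at h1
      have h2 : W (ℓ + 1) - W ℓ = α ℓ • D ℓ := by
        rw [hupdate ℓ]; abel
      rw [h2, norm_smul, Real.norm_eq_abs, abs_of_pos (hα ℓ),
        Real.coe_toNNReal L hL.le] at h1
      exact h1
    have hdiff : ⟪g (W (ℓ + 1)), D ℓ⟫ - p ℓ ≤ L * α ℓ * ‖D ℓ‖ ^ 2 := by
      have h1 : ⟪g (W (ℓ + 1)) - g (W ℓ), D ℓ⟫ = ⟪g (W (ℓ + 1)), D ℓ⟫ - p ℓ := by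
        rw [inner_sub_left]
      have h2 := real_inner_le_norm (g (W (ℓ + 1)) - g (W ℓ)) (D ℓ)
      have h3 : ‖g (W (ℓ + 1)) - g (W ℓ)‖ * ‖D ℓ‖ ≤ L * (α ℓ * ‖D ℓ‖) * ‖D ℓ‖ :=
        mul_le_mul_of_nonneg_right hlip' (norm_nonneg _)
      calc ⟪g (W (ℓ + 1)), D ℓ⟫ - p ℓ = ⟪g (W (ℓ + 1)) - g (W ℓ), D ℓ⟫ := h1.symm
        _ ≤ ‖g (W (ℓ + 1)) - g (W ℓ)‖ * ‖D ℓ‖ := h2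
        _ ≤ L * (α ℓ * ‖D ℓ‖) * ‖D ℓ‖ := h3
        _ = L * α ℓ * ‖D ℓ‖ ^ 2 := by ring
    have hkey : (c₂ - 1) * p ℓ ≤ L * α ℓ * ‖D ℓ‖ ^ 2 := by
      have : (c₂ - 1) * p ℓ = c₂ * p ℓ - p ℓ := by ring
      linarith
    have hden : 0 < L * ‖D ℓ‖ ^ 2 := mul_pos hL (pow_pos (hDpos ℓ) 2)
    have hαlow : (c₂ - 1) * p ℓ / (L * ‖D ℓ‖ ^ 2) ≤ α ℓ := by
      rw [div_le_iff₀ hden]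
      calc (c₂ - 1) * p ℓ ≤ L * α ℓ * ‖D ℓ‖ ^ 2 := hkey
        _ = α ℓ * (L * ‖D ℓ‖ ^ 2) := by ring
    have hmul : c₁ * α ℓ * p ℓ ≤ c₁ * ((c₂ - 1) * p ℓ / (L * ‖D ℓ‖ ^ 2)) * p ℓ := by
      have hcp : c₁ * p ℓ < 0 := mul_neg_of_pos_of_neg hc₁ (hpneg ℓ)
      have := mul_le_mul_of_nonpos_left hαlow hcp.le
      calc c₁ * α ℓ * p ℓ = c₁ * p ℓ * α ℓ := by ring
        _ ≤ c₁ * p ℓ * ((c₂ - 1) * p ℓ / (L * ‖D ℓ‖ ^ 2)) := this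
        _ = c₁ * ((c₂ - 1) * p ℓ / (L * ‖D ℓ‖ ^ 2)) * p ℓ := by ring
    have heq : c₁ * ((c₂ - 1) * p ℓ / (L * ‖D ℓ‖ ^ 2)) * p ℓ = -(c * s ℓ) := by
      rw [hcdef, hsdef]
      field_simp
      ring
    have hw1 : f (W (ℓ + 1)) ≤ f (W ℓ) + c₁ * α ℓ * p ℓ := hwolfe₁ ℓ
    linarith [hmul, heq ▸ hmul, hw1]
  have htel : ∀ n, f (W n) + c * ∑ ℓ ∈ Finset.range n, s ℓ ≤ f (W 0) := by
    intro n
    induction n with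
    | zero => simp
    | succ n ih =>
      rw [Finset.sum_range_succ, mul_add]
      have := hstep n
      linarith
  have hbound : ∀ n, c * ∑ ℓ ∈ Finset.range n, s ℓ ≤ f (W 0) - B := by
    intro n
    have := htel n
    have := hbdd (W n)
    linarith
  -- growth bound for ‖D‖²
  set κ : ℝ := 1 + 2 * c₂ / (1 - c₂) with hκdef
  have hκpos : 0 < κ := by positivity
  have hgrow : ∀ ℓ, ‖D (ℓ + 1)‖ ^ 2
      ≤ κ * G (ℓ + 1) ^ 2 + (G (ℓ + 1) ^ 2 / G ℓ ^ 2) ^ 2 * ‖D ℓ‖ ^ 2 := by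
    intro ℓ
    set b := G (ℓ + 1) ^ 2 / G ℓ ^ 2 with hbdef
    have hb0 : 0 ≤ b := by positivity
    have hbG : b * G ℓ ^ 2 = G (ℓ + 1) ^ 2 :=
      div_mul_cancel₀ _ (pow_ne_zero 2 (hGne ℓ))
    set q := ⟪g (W (ℓ + 1)), D ℓ⟫ with hqdef
    have hq2 : |q| ≤ c₂ / (1 - c₂) * G ℓ ^ 2 := by
      have hq : |q| ≤ c₂ * (-p ℓ) := by
        have := hwolfe₂ ℓ
        rwa [abs_of_neg (hpneg ℓ)] at this
      have h1 : -p ℓ ≤ 1 / (1 - c₂) * G ℓ ^ 2 := by linarith [(hA ℓ).1]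
      calc |q| ≤ c₂ * (-p ℓ) := hq
        _ ≤ c₂ * (1 / (1 - c₂) * G ℓ ^ 2) := mul_le_mul_of_nonneg_left h1 hc₂pos.le
        _ = c₂ / (1 - c₂) * G ℓ ^ 2 := by ring
    have hexp : ‖D (ℓ + 1)‖ ^ 2 = G (ℓ + 1) ^ 2 + 2 * (-(b * q)) + b ^ 2 * ‖D ℓ‖ ^ 2 := by
      rw [hDrec ℓ, norm_add_sq_real, norm_neg, norm_smul, inner_smul_right,
        inner_neg_left, Real.norm_eq_abs, mul_pow, sq_abs]
      simp only [hGn, ← hqdef, ← hbdef]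
      ring
    have habs : -(b * q) ≤ c₂ / (1 - c₂) * G (ℓ + 1) ^ 2 := by
      have h1 : |b * q| ≤ c₂ / (1 - c₂) * G (ℓ + 1) ^ 2 := by
        rw [abs_mul, abs_of_nonneg hb0]
        calc b * |q| ≤ b * (c₂ / (1 - c₂) * G ℓ ^ 2) := mul_le_mul_of_nonneg_left hq2 hb0
          _ = c₂ / (1 - c₂) * (b * G ℓ ^ 2) := by ring
          _ = c₂ / (1 - c₂) * G (ℓ + 1) ^ 2 := by rw [hbG]
      linarith [neg_abs_le (b * q), abs_nonneg (b * q)]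
    rw [hexp, hκdef, ← sub_nonneg]
    have hne : (1 - c₂) ≠ 0 := h1c₂.ne'
    have hid : (1 + 2 * c₂ / (1 - c₂)) * G (ℓ + 1) ^ 2 + b ^ 2 * ‖D ℓ‖ ^ 2
        - (G (ℓ + 1) ^ 2 + 2 * -(b * q) + b ^ 2 * ‖D ℓ‖ ^ 2)
        = 2 * (c₂ / (1 - c₂) * G (ℓ + 1) ^ 2 - -(b * q)) := by
      field_simp
      ring
    rw [hid]
    linarith [habs]
  -- main contradiction argument
  have hfreq : ∀ ε > (0:ℝ), ∀ N : ℕ, ∃ ℓ, N ≤ ℓ ∧ G ℓ < ε := by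
    by_contra hcon
    push_neg at hcon
    obtain ⟨ε, hε, N, hN⟩ := hcon
    -- hN : ∀ ℓ, N ≤ ℓ → ε ≤ G ℓ
    obtain ⟨u, hudef⟩ : ∃ u : ℕ → ℝ, ∀ m, u m = ‖D m‖ ^ 2 / G m ^ 4 :=
      ⟨_, fun _ => rfl⟩
    have hupos : ∀ ℓ, 0 < u ℓ := fun ℓ => by
      rw [hudef]
      exact div_pos (pow_pos (hDpos ℓ) 2) (pow_pos (hG ℓ) 4)
    have hurec : ∀ ℓ, N ≤ ℓ → u (ℓ + 1) ≤ u ℓ + κ / ε ^ 2 := by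
      intro ℓ hℓ
      have hGε : ε ≤ G (ℓ + 1) := hN (ℓ + 1) (by omega)
      have h4 : (0:ℝ) < G (ℓ + 1) ^ 4 := pow_pos (hG (ℓ + 1)) 4
      have h1 : u (ℓ + 1) ≤ (κ * G (ℓ + 1) ^ 2
          + (G (ℓ + 1) ^ 2 / G ℓ ^ 2) ^ 2 * ‖D ℓ‖ ^ 2) / G (ℓ + 1) ^ 4 := by
        simp only [hudef]
        exact (div_le_div_iff_of_pos_right h4).mpr (hgrow ℓ)
      have h2 : (κ * G (ℓ + 1) ^ 2 + (G (ℓ + 1) ^ 2 / G ℓ ^ 2) ^ 2 * ‖D ℓ‖ ^ 2)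
          / G (ℓ + 1) ^ 4 = κ / G (ℓ + 1) ^ 2 + u ℓ := by
        have h1' := hGne (ℓ + 1)
        have h0' := hGne ℓ
        simp only [hudef]
        field_simp
      have h3 : κ / G (ℓ + 1) ^ 2 ≤ κ / ε ^ 2 := by
        apply div_le_div_of_nonneg_left hκpos.le (by positivity)
        nlinarith
      calc u (ℓ + 1) ≤ κ / G (ℓ + 1) ^ 2 + u ℓ := by rw [← h2]; exact h1
        _ ≤ u ℓ + κ / ε ^ 2 := by linarith
    have hu : ∀ k : ℕ, u (N + k) ≤ u N + k * (κ / ε ^ 2) := by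
      intro k
      induction k with
      | zero => simp
      | succ k ih =>
        have := hurec (N + k) (by omega)
        have hcast : ((k + 1 : ℕ) : ℝ) = (k : ℝ) + 1 := by push_cast; ring
        calc u (N + (k + 1)) = u ((N + k) + 1) := by ring_nf
          _ ≤ u (N + k) + κ / ε ^ 2 := this
          _ ≤ u N + k * (κ / ε ^ 2) + κ / ε ^ 2 := by linarith
          _ = u N + ((k : ℝ) + 1) * (κ / ε ^ 2) := by ring
          _ = u N + ((k + 1 : ℕ) : ℝ) * (κ / ε ^ 2) := by rw [hcast]
    obtain ⟨M, h1M, h2M, hMpos⟩ : ∃ M : ℝ, u N ≤ M ∧ κ / ε ^ 2 ≤ M ∧ 0 < M :=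
      ⟨max (u N) (κ / ε ^ 2), le_max_left _ _, le_max_right _ _,
        lt_of_lt_of_le (hupos N) (le_max_left _ _)⟩
    have huM : ∀ k : ℕ, u (N + k) ≤ M * (k + 1) := by
      intro k
      have h1 : u N ≤ M := h1M
      have h2 : κ / ε ^ 2 ≤ M := h2M
      have h3 : (0:ℝ) ≤ k := Nat.cast_nonneg k
      calc u (N + k) ≤ u N + k * (κ / ε ^ 2) := hu k
        _ ≤ M + k * M := add_le_add h1 (mul_le_mul_of_nonneg_left h2 h3)
        _ = M * (k + 1) := by ring
    obtain ⟨θ, hθdef⟩ : ∃ θ : ℝ, θ = (1 - 2 * c₂) / (1 - c₂) := ⟨_, rfl⟩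
    have hθp : 0 < θ := hθdef ▸ div_pos hθpos h1c₂
    have hslow : ∀ k : ℕ, θ ^ 2 / M * (1 / ((k : ℝ) + 1)) ≤ s (N + k) := by
      intro k
      have hDu : ‖D (N + k)‖ ^ 2 = u (N + k) * G (N + k) ^ 4 := by
        simp only [hudef]
        rw [div_mul_cancel₀ _ (pow_ne_zero 4 (hGne (N + k)))]
      have hp2 : θ ^ 2 * G (N + k) ^ 4 ≤ p (N + k) ^ 2 := by
        have h2 := (hA (N + k)).2
        rw [← hθdef] at h2
        have hθG : 0 < θ * G (N + k) ^ 2 := mul_pos hθp (pow_pos (hG (N + k)) 2)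
        have h3 : θ * G (N + k) ^ 2 ≤ -p (N + k) := by linarith
        have h4 := mul_le_mul h3 h3 hθG.le (by linarith : (0:ℝ) ≤ -p (N + k))
        calc θ ^ 2 * G (N + k) ^ 4
            = (θ * G (N + k) ^ 2) * (θ * G (N + k) ^ 2) := by ring
          _ ≤ (-p (N + k)) * (-p (N + k)) := h4
          _ = p (N + k) ^ 2 := by ring
      have hk1 : (0:ℝ) < (k : ℝ) + 1 := by positivity
      have hDpos' : (0:ℝ) < ‖D (N + k)‖ ^ 2 := pow_pos (hDpos (N + k)) 2
      rw [hsdef]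
      rw [div_mul_div_comm, mul_one, div_le_div_iff₀ (by positivity) hDpos']
      have hG4 : (0:ℝ) < G (N + k) ^ 4 := pow_pos (hG (N + k)) 4
      calc θ ^ 2 * ‖D (N + k)‖ ^ 2 = θ ^ 2 * (u (N + k) * G (N + k) ^ 4) := by rw [hDu]
        _ ≤ θ ^ 2 * (M * (k + 1) * G (N + k) ^ 4) :=
            mul_le_mul_of_nonneg_left
              (mul_le_mul_of_nonneg_right (huM k) (pow_pos (hG (N + k)) 4).le)
              (sq_nonneg θ)
        _ = (θ ^ 2 * G (N + k) ^ 4) * (M * ((k : ℝ) + 1)) := by ring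
        _ ≤ p (N + k) ^ 2 * (M * ((k : ℝ) + 1)) := by
            have hMk : (0:ℝ) ≤ M * ((k : ℝ) + 1) := by positivity
            exact mul_le_mul_of_nonneg_right hp2 hMk
    have hsumlow : ∀ n : ℕ, θ ^ 2 / M * ∑ k ∈ Finset.range n, (1 / ((k : ℝ) + 1))
        ≤ ∑ ℓ ∈ Finset.range (N + n), s ℓ := by
      intro n
      rw [Finset.sum_range_add]
      have h1 : (0:ℝ) ≤ ∑ ℓ ∈ Finset.range N, s ℓ :=
        Finset.sum_nonneg fun ℓ _ => hs0 ℓ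
      have h2 : θ ^ 2 / M * ∑ k ∈ Finset.range n, (1 / ((k : ℝ) + 1))
          ≤ ∑ k ∈ Finset.range n, s (N + k) := by
        rw [Finset.mul_sum]
        exact Finset.sum_le_sum fun k _ => hslow k
      linarith
    -- harmonic series diverges: contradiction
    have hup : ∀ n : ℕ, ∑ k ∈ Finset.range n, (1 / ((k : ℝ) + 1))
        ≤ (f (W 0) - B) / c * (M / θ ^ 2) := by
      intro n
      have h1 := hsumlow n
      have h2 := hbound (N + n)
      have h3 : c * (θ ^ 2 / M * ∑ k ∈ Finset.range n, (1 / ((k : ℝ) + 1)))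
          ≤ f (W 0) - B := by
        calc c * (θ ^ 2 / M * ∑ k ∈ Finset.range n, (1 / ((k : ℝ) + 1)))
            ≤ c * ∑ ℓ ∈ Finset.range (N + n), s ℓ :=
              mul_le_mul_of_nonneg_left h1 hcpos.le
          _ ≤ f (W 0) - B := h2
      have hcθ : 0 < c * (θ ^ 2 / M) := by positivity
      have h4 : ∑ k ∈ Finset.range n, (1 / ((k : ℝ) + 1))
          ≤ (f (W 0) - B) / (c * (θ ^ 2 / M)) := by
        rw [le_div_iff₀ hcθ]
        calc (∑ k ∈ Finset.range n, (1 / ((k : ℝ) + 1))) * (c * (θ ^ 2 / M))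
            = c * (θ ^ 2 / M * ∑ k ∈ Finset.range n, (1 / ((k : ℝ) + 1))) := by ring
          _ ≤ f (W 0) - B := h3
      have h5 : (f (W 0) - B) / (c * (θ ^ 2 / M))
          = (f (W 0) - B) / c * (M / θ ^ 2) := by
        have h₁ : c ≠ 0 := hcpos.ne'
        have h₂ : θ ≠ 0 := hθp.ne'
        have h₃ : M ≠ 0 := hMpos.ne'
        field_simp
      rw [h5] at h4
      exact h4
    have hdiv := Real.tendsto_sum_range_one_div_nat_succ_atTop
    obtain ⟨n, hn⟩ := (Filter.tendsto_atTop.mp hdiv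
      ((f (W 0) - B) / c * (M / θ ^ 2) + 1)).exists
    have := hup n
    simp only [one_div] at hn this
    linarith
  -- conclude liminf = 0
  have hfreq' : ∀ ε > (0:ℝ), ∃ᶠ ℓ in Filter.atTop, G ℓ ≤ ε := by
    intro ε hε
    rw [Filter.frequently_atTop]
    intro N
    obtain ⟨ℓ, hℓ, h⟩ := hfreq ε hε N
    exact ⟨ℓ, hℓ, h.le⟩
  have hbdlow : Filter.IsBoundedUnder (· ≥ ·) Filter.atTop G :=
    ⟨0, Filter.eventually_map.mpr (Filter.Eventually.of_forall fun ℓ => (hG ℓ).le)⟩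
  have hcob : Filter.IsCoboundedUnder (· ≥ ·) Filter.atTop G :=
    Filter.IsCoboundedUnder.of_frequently_le (hfreq' 1 one_pos)
  refine le_antisymm ?_ ?_
  · refine le_of_forall_pos_le_add fun ε hε => ?_
    have := Filter.liminf_le_of_frequently_le (hfreq' ε hε) hbdlow
    linarith
  · exact Filter.le_liminf_of_le hcob
      (Filter.Eventually.of_forall fun ℓ => norm_nonneg _)
end

section
/- Direction-norm growth bound in Fletcher–Reeves CG: if ‖grad f(W_k)‖ ≥ ε > 0 for all k ≤ ℓ and the curvature condition gives |⟨grad f(W_ℓ), D_{ℓ-1}⟩| ≤ (c₂/(1-c₂))‖grad f(W_{ℓ-1})‖², then ‖D_ℓ‖² ≤ ((1+c₂)/(1-c₂))·‖grad f(W_ℓ)‖⁴·Σ_{k=0}^{ℓ} ‖grad f(W_k)‖^{-2} ≤ ((1+c₂)/(1-c₂))·‖grad f(W_ℓ)‖⁴·(ℓ+1)/ε². -/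
open RealInnerProductSpace

private lemma fr_aux
    {H : Type*} [NormedAddCommGroup H] [InnerProductSpace ℝ H]
    (g : H → H) (c₂ : ℝ) (hc₂0 : 0 < c₂) (hc₂ : c₂ < 1 / 2)
    (W D : ℕ → H)
    (hD0 : D 0 = -g (W 0))
    (hDrec : ∀ k, D (k + 1) =
      -g (W (k + 1)) + (‖g (W (k + 1))‖ ^ 2 / ‖g (W k)‖ ^ 2) • D k)
    (hcurv : ∀ k, |⟪g (W (k + 1)), D k⟫| ≤ (c₂ / (1 - c₂)) * ‖g (W k)‖ ^ 2)
    (ε : ℝ) (hε : 0 < ε) :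
    ∀ ℓ, (∀ k ≤ ℓ, ε ≤ ‖g (W k)‖) →
      ‖D ℓ‖ ^ 2 ≤ ((1 + c₂) / (1 - c₂)) * ‖g (W ℓ)‖ ^ 4 *
        ∑ k ∈ Finset.range (ℓ + 1), (‖g (W k)‖ ^ 2)⁻¹ := by
  have h1c : 0 < 1 - c₂ := by linarith
  have hC1 : 1 ≤ (1 + c₂) / (1 - c₂) := by
    rw [le_div_iff₀ h1c]; linarith
  intro ℓ
  induction ℓ with
  | zero =>
    intro hlow
    have hg0 : 0 < ‖g (W 0)‖ := lt_of_lt_of_le hε (hlow 0 le_rfl)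
    have hD : ‖D 0‖ ^ 2 = ‖g (W 0)‖ ^ 2 := by rw [hD0, norm_neg]
    rw [hD, Finset.sum_range_one]
    have h4 : ‖g (W 0)‖ ^ 4 * (‖g (W 0)‖ ^ 2)⁻¹ = ‖g (W 0)‖ ^ 2 := by
      field_simp
    rw [mul_assoc, h4]
    nlinarith [sq_nonneg (‖g (W 0)‖)]
  | succ n ih =>
    intro hlow
    have ih' := ih (fun k hk => hlow k (hk.trans (Nat.le_succ n)))
    have hgn : 0 < ‖g (W n)‖ := lt_of_lt_of_le hε (hlow n (Nat.le_succ n))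
    set a := ‖g (W (n+1))‖ with ha
    set b := ‖g (W n)‖ with hb
    set β := a ^ 2 / b ^ 2 with hβ
    have hβ0 : 0 ≤ β := by positivity
    have hexp : ‖D (n+1)‖ ^ 2 =
        a ^ 2 - 2 * β * ⟪g (W (n+1)), D n⟫ + β ^ 2 * ‖D n‖ ^ 2 := by
      rw [hDrec n]
      rw [@norm_add_sq_real]
      rw [norm_neg, inner_neg_left, real_inner_smul_right, norm_smul,
        mul_pow, Real.norm_eq_abs, abs_of_nonneg hβ0]
      ring
    have hcur := hcurv n
    have habs : -2 * β * ⟪g (W (n+1)), D n⟫ ≤ 2 * (c₂ / (1 - c₂)) * a ^ 2 := by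
      have h1 : β * (-⟪g (W (n+1)), D n⟫) ≤ β * ((c₂ / (1 - c₂)) * b ^ 2) := by
        apply mul_le_mul_of_nonneg_left _ hβ0
        exact (neg_le_abs _).trans hcur
      have h2 : β * b ^ 2 = a ^ 2 :=
        div_mul_cancel₀ _ (by positivity : b ^ 2 ≠ 0)
      have h3 : β * (c₂ / (1 - c₂) * b ^ 2) = c₂ / (1 - c₂) * a ^ 2 := by
        rw [← h2]; ring
      linarith
    have hsum : ∑ k ∈ Finset.range (n + 2), (‖g (W k)‖ ^ 2)⁻¹ =
        (∑ k ∈ Finset.range (n + 1), (‖g (W k)‖ ^ 2)⁻¹) + (a ^ 2)⁻¹ :=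
      Finset.sum_range_succ _ _
    have hβsq : β ^ 2 * (((1 + c₂) / (1 - c₂)) * b ^ 4 *
        ∑ k ∈ Finset.range (n + 1), (‖g (W k)‖ ^ 2)⁻¹) =
        ((1 + c₂) / (1 - c₂)) * a ^ 4 *
        ∑ k ∈ Finset.range (n + 1), (‖g (W k)‖ ^ 2)⁻¹ := by
      rw [hβ]; field_simp
    have hstep : β ^ 2 * ‖D n‖ ^ 2 ≤ ((1 + c₂) / (1 - c₂)) * a ^ 4 *
        ∑ k ∈ Finset.range (n + 1), (‖g (W k)‖ ^ 2)⁻¹ := by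
      rw [← hβsq]
      exact mul_le_mul_of_nonneg_left ih' (by positivity)
    have ha0 : 0 < a := lt_of_lt_of_le hε (hlow (n+1) le_rfl)
    have hlast : a ^ 2 + 2 * (c₂ / (1 - c₂)) * a ^ 2 =
        ((1 + c₂) / (1 - c₂)) * a ^ 4 * (a ^ 2)⁻¹ := by
      field_simp; ring
    rw [hsum, mul_add]
    calc ‖D (n+1)‖ ^ 2 ≤ a ^ 2 + 2 * (c₂ / (1 - c₂)) * a ^ 2 + β ^ 2 * ‖D n‖ ^ 2 := by
          rw [hexp]; linarith
      _ ≤ ((1 + c₂) / (1 - c₂)) * a ^ 4 * (a ^ 2)⁻¹ +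
          ((1 + c₂) / (1 - c₂)) * a ^ 4 *
            ∑ k ∈ Finset.range (n + 1), (‖g (W k)‖ ^ 2)⁻¹ := by
          rw [← hlast]; linarith
      _ = _ := by ring

/-- Direction-norm growth bound in Fletcher–Reeves conjugate gradient: if
`‖grad f(W_k)‖ ≥ ε > 0` for all `k ≤ ℓ` and the curvature condition gives
`|⟨grad f(W_{k+1}), D_k⟩| ≤ (c₂/(1-c₂)) ‖grad f(W_k)‖²`, then
`‖D_ℓ‖² ≤ ((1+c₂)/(1-c₂)) ‖grad f(W_ℓ)‖⁴ Σ_{k=0}^{ℓ} ‖grad f(W_k)‖⁻²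
       ≤ ((1+c₂)/(1-c₂)) ‖grad f(W_ℓ)‖⁴ (ℓ+1)/ε²`. -/
theorem fletcher_reeves_direction_growth
    {H : Type*} [NormedAddCommGroup H] [InnerProductSpace ℝ H] [CompleteSpace H]
    (f : H → ℝ) (g : H → H)
    (hgrad : ∀ x, HasGradientAt f (g x) x)
    (c₂ : ℝ) (hc₂0 : 0 < c₂) (hc₂ : c₂ < 1 / 2)
    (W D : ℕ → H)
    (hD0 : D 0 = -g (W 0))
    (hDrec : ∀ k, D (k + 1) =
      -g (W (k + 1)) + (‖g (W (k + 1))‖ ^ 2 / ‖g (W k)‖ ^ 2) • D k)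
    (hcurv : ∀ k, |⟪g (W (k + 1)), D k⟫| ≤ (c₂ / (1 - c₂)) * ‖g (W k)‖ ^ 2)
    (ℓ : ℕ) (ε : ℝ) (hε : 0 < ε)
    (hlow : ∀ k ≤ ℓ, ε ≤ ‖g (W k)‖) :
    ‖D ℓ‖ ^ 2 ≤ ((1 + c₂) / (1 - c₂)) * ‖g (W ℓ)‖ ^ 4 *
        ∑ k ∈ Finset.range (ℓ + 1), (‖g (W k)‖ ^ 2)⁻¹ ∧
      ((1 + c₂) / (1 - c₂)) * ‖g (W ℓ)‖ ^ 4 *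
          ∑ k ∈ Finset.range (ℓ + 1), (‖g (W k)‖ ^ 2)⁻¹ ≤
        ((1 + c₂) / (1 - c₂)) * ‖g (W ℓ)‖ ^ 4 * ((ℓ + 1) / ε ^ 2) := by
  have h1c : 0 < 1 - c₂ := by linarith
  constructor
  · exact fr_aux g c₂ hc₂0 hc₂ W D hD0 hDrec hcurv ε hε ℓ hlow
  · apply mul_le_mul_of_nonneg_left _ (by positivity)
    have hbound : ∑ k ∈ Finset.range (ℓ + 1), (‖g (W k)‖ ^ 2)⁻¹ ≤
        ∑ k ∈ Finset.range (ℓ + 1), (ε ^ 2)⁻¹ := by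
      apply Finset.sum_le_sum
      intro k hk
      have hk' : k ≤ ℓ := Nat.lt_succ_iff.mp (Finset.mem_range.mp hk)
      have := hlow k hk'
      apply inv_anti₀ (by positivity)
      nlinarith
    calc _ ≤ ∑ k ∈ Finset.range (ℓ + 1), (ε ^ 2)⁻¹ := hbound
      _ = (ℓ + 1) * (ε ^ 2)⁻¹ := by
          rw [Finset.sum_const, Finset.card_range]; push_cast; ring
      _ = (↑ℓ + 1) / ε ^ 2 := by ring
end
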